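/- Let μ, λ > 0 with μλ ≤ 1, let β₁, β₂ ∈ [0,1), and let α > 0. For δ ∈ ℝ define A'(δ) = [[1 + β₁ + δ(1 + β₂), −(β₁ + δβ₂)],[1, 0]] ∈ ℝ^{2×2} and M'(δ) = [[−(2αδ + λα² + μδ²), −(α + μδ)],[−(α + μδ), −μ]] ∈ ℝ^{2×2}. Then there exists δ ∈ ℝ such that all three of the following hold — (1) det(e^{iω}I − A'(δ)) ≠ 0 for all ω ∈ ℝ, (2) A'(δ) is Schur stable, (3) the (1,1) entry of M'(δ) is nonnegative — if and only if α < 2(1 + β₁)(1 + √(1 − μλ)) / (λ(1 + 2β₂)). -/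

import Mathlib

/-!
Condition (1) only excludes eigenvalues on the unit circle, so it is implied by (2). For the
companion-type matrix `A'(δ)`, whose characteristic polynomial is `z² - t z + d` with
`t = 1 + β₁ + δ (1 + β₂)` and `d = β₁ + δ β₂`, the Jury criterion says that (2) holds iff `d < 1`,
`0 < 1 - t + d = -δ` and `0 < 1 + t + d = 2 (1 + β₁) + δ (1 + 2 β₂)`. Condition (3) says that
`μ δ² + 2 α δ + λ α² ≤ 0`, i.e. `|μ δ + α| ≤ α √(1 - μλ)`, which puts `δ` below
`δ* = α (√(1 - μλ) - 1) / μ < 0`. As the last Jury quantity increases with `δ`, a suitable `δ`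
exists iff `δ*` itself works, iff `0 < 2 (1 + β₁) + δ* (1 + 2 β₂)`, which rearranges to the
step-size bound.
-/

open Matrix

/-- The shifted system matrix `A'(δ)` of the general accelerated gradient method. -/
noncomputable def Ashift (β₁ β₂ δ : ℝ) : Matrix (Fin 2) (Fin 2) ℝ :=
  !![1 + β₁ + δ * (1 + β₂), -(β₁ + δ * β₂); 1, 0]

/-- The shifted multiplier matrix `M'(δ)`. -/
noncomputable def Mshift (μ lam α δ : ℝ) : Matrix (Fin 2) (Fin 2) ℝ :=
  !![-(2 * α * δ + lam * α ^ 2 + μ * δ ^ 2), -(α + μ * δ);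
     -(α + μ * δ), -μ]

lemma sq_lt_one_of_sq_sub_mul_add_eq_zero {t d x : ℝ} (hd : d < 1) (hp : 0 < 1 + t + d)
    (hm : 0 < 1 - t + d) (hx : x ^ 2 - t * x + d = 0) : x ^ 2 < 1 := by
  -- with `y = t - x` the other root, `1 ± t + d = (1 ± x) * (1 ± y)` and `d = x * y`
  rw [sq_lt_one_iff_abs_lt_one, abs_lt]
  constructor <;> by_contra! h <;> nlinarith

lemma norm_lt_one_of_sq_sub_mul_add_eq_zero {t d : ℝ} (hd : d < 1) (hp : 0 < 1 + t + d)
    (hm : 0 < 1 - t + d) {z : ℂ} (hz : z ^ 2 - t * z + d = 0) : ‖z‖ < 1 := by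
  have hre : z.re ^ 2 - z.im ^ 2 - t * z.re + d = 0 := by
    simpa [sq] using congrArg Complex.re hz
  have him : z.im * (2 * z.re - t) = 0 := by
    have := congrArg Complex.im hz
    simp only [sq, Complex.sub_im, Complex.add_im, Complex.mul_im, Complex.ofReal_re,
      Complex.ofReal_im, Complex.zero_im, zero_mul, add_zero] at this
    linarith
  rw [← sq_lt_one_iff₀ (norm_nonneg z), Complex.sq_norm, Complex.normSq_apply]
  rcases mul_eq_zero.mp him with hreal | htrace
  · rw [hreal] at hre ⊢
    simpa [sq] using sq_lt_one_of_sq_sub_mul_add_eq_zero hd hp hm (x := z.re) (by linarith)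
  · -- a non-real root has `t = 2 * z.re`, so `hre` reads `‖z‖ ^ 2 = d`
    nlinarith

lemma exists_le_neg_one_sq_sub_mul_add_eq_zero {t d : ℝ} (h : 1 + t + d ≤ 0) :
    ∃ x ≤ -1, x ^ 2 - t * x + d = 0 := by
  have hdisc : (t + 2) ^ 2 ≤ t ^ 2 - 4 * d := by linarith
  refine ⟨(t - √(t ^ 2 - 4 * d)) / 2, ?_, ?_⟩
  · linarith [(le_abs_self _).trans (Real.abs_le_sqrt hdisc)]
  · linear_combination Real.sq_sqrt ((sq_nonneg _).trans hdisc) / 4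

namespace Matrix

variable {n : Type*} [Fintype n] [DecidableEq n]

def IsSchurStable (A : Matrix n n ℝ) : Prop :=
  ∀ z ∈ spectrum ℂ (A.map (algebraMap ℝ ℂ)), ‖z‖ < 1

lemma mem_spectrum_iff_det_smul_one_sub_eq_zero {K : Type*} [Field K] (A : Matrix n n K) (z : K) :
    z ∈ spectrum K A ↔ det (z • (1 : Matrix n n K) - A) = 0 := by
  rw [mem_spectrum_iff_isRoot_charpoly, Polynomial.IsRoot, eval_charpoly, scalar_apply,
    smul_one_eq_diagonal]

lemma IsSchurStable.det_exp_mul_I_smul_one_sub_ne_zero {A : Matrix n n ℝ}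
    (hA : A.IsSchurStable) (ω : ℝ) :
    det (Complex.exp (ω * Complex.I) • (1 : Matrix n n ℂ) - A.map (algebraMap ℝ ℂ)) ≠ 0 := by
  intro h
  have := hA _ ((mem_spectrum_iff_det_smul_one_sub_eq_zero _ _).2 h)
  simp [Complex.norm_exp_ofReal_mul_I] at this

lemma mem_spectrum_map_iff_fin_two (A : Matrix (Fin 2) (Fin 2) ℝ) (z : ℂ) :
    z ∈ spectrum ℂ (A.map (algebraMap ℝ ℂ)) ↔ z ^ 2 - A.trace * z + A.det = 0 := by
  rw [mem_spectrum_iff_isRoot_charpoly, charpoly_fin_two]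
  simp [trace_fin_two, det_fin_two]

lemma isSchurStable_fin_two_of_jury {A : Matrix (Fin 2) (Fin 2) ℝ} (hd : A.det < 1)
    (hp : 0 < 1 + A.trace + A.det) (hm : 0 < 1 - A.trace + A.det) : A.IsSchurStable :=
  fun _ hz ↦
    norm_lt_one_of_sq_sub_mul_add_eq_zero hd hp hm ((mem_spectrum_map_iff_fin_two _ _).1 hz)

lemma IsSchurStable.one_add_trace_add_det_pos {A : Matrix (Fin 2) (Fin 2) ℝ}
    (hA : A.IsSchurStable) : 0 < 1 + A.trace + A.det := by
  by_contra! h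
  obtain ⟨x, hx, hroot⟩ := exists_le_neg_one_sq_sub_mul_add_eq_zero h
  have := hA x ((mem_spectrum_map_iff_fin_two _ _).2 (by exact_mod_cast hroot))
  rw [Complex.norm_real, Real.norm_eq_abs, abs_lt] at this
  linarith

end Matrix

lemma trace_Ashift (β₁ β₂ δ : ℝ) : (Ashift β₁ β₂ δ).trace = 1 + β₁ + δ * (1 + β₂) := by
  simp [Ashift, trace_fin_two]

lemma det_Ashift (β₁ β₂ δ : ℝ) : (Ashift β₁ β₂ δ).det = β₁ + δ * β₂ := by
  simp [Ashift, det_fin_two]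

lemma Mshift_zero_zero_nonneg_iff {μ lam α δ : ℝ} (hμ : 0 < μ) (hμlam : μ * lam ≤ 1)
    (hα : 0 ≤ α) : 0 ≤ Mshift μ lam α δ 0 0 ↔ |μ * δ + α| ≤ α * √(1 - μ * lam) := by
  have hsq : (α * √(1 - μ * lam)) ^ 2 = α ^ 2 * (1 - μ * lam) := by
    rw [mul_pow, Real.sq_sqrt (by linarith)]
  have hμM : μ * Mshift μ lam α δ 0 0 = (α * √(1 - μ * lam)) ^ 2 - (μ * δ + α) ^ 2 := by
    rw [hsq]
    simp only [Mshift, of_apply, cons_val', cons_val_zero, empty_val', cons_val_fin_one]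
    ring
  rw [← mul_nonneg_iff_of_pos_left hμ, hμM, sub_nonneg, sq_le_sq,
    abs_of_nonneg (by positivity : 0 ≤ α * √(1 - μ * lam))]

lemma stepsize_bound_iff {μ lam α β₁ β₂ : ℝ} (hμ : 0 < μ) (hlam : 0 < lam) (hμlam : μ * lam ≤ 1)
    (hβ₂ : 0 ≤ β₂) :
    α < 2 * (1 + β₁) * (1 + √(1 - μ * lam)) / (lam * (1 + 2 * β₂)) ↔
      0 < 2 * (1 + β₁) + α * (√(1 - μ * lam) - 1) / μ * (1 + 2 * β₂) := by
  set s := √(1 - μ * lam)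
  have hs : s ^ 2 = 1 - μ * lam := Real.sq_sqrt (by linarith)
  have hs1 : 0 < 1 - s := by nlinarith [mul_pos hμ hlam, Real.sqrt_nonneg (1 - μ * lam)]
  calc α < 2 * (1 + β₁) * (1 + s) / (lam * (1 + 2 * β₂))
      ↔ α * (lam * (1 + 2 * β₂)) * (1 - s) < 2 * (1 + β₁) * (1 + s) * (1 - s) := by
        rw [lt_div_iff₀ (by positivity), mul_lt_mul_iff_left₀ hs1]
    _ ↔ lam * (α * (1 - s) * (1 + 2 * β₂)) < lam * (2 * μ * (1 + β₁)) := by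
        rw [show 2 * (1 + β₁) * (1 + s) * (1 - s) = lam * (2 * μ * (1 + β₁)) by
          linear_combination (-2 * (1 + β₁)) * hs]
        ring_nf
    _ ↔ 0 < μ * (2 * (1 + β₁) + α * (s - 1) / μ * (1 + 2 * β₂)) := by
        rw [mul_lt_mul_iff_right₀ hlam, ← sub_pos]
        field_simp
        ring_nf
    _ ↔ _ := mul_pos_iff_of_pos_left hμ

theorem kyp_conditions_iff_stepsize_bound
    (μ lam β₁ β₂ α : ℝ) (hμ : 0 < μ) (hlam : 0 < lam) (hμlam : μ * lam ≤ 1)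
    (hβ₁ : β₁ ∈ Set.Ico (0 : ℝ) 1) (hβ₂ : β₂ ∈ Set.Ico (0 : ℝ) 1) (hα : 0 < α) :
    (∃ δ : ℝ,
      (∀ ω : ℝ, det (Complex.exp (ω * Complex.I) • (1 : Matrix (Fin 2) (Fin 2) ℂ) -
        (Ashift β₁ β₂ δ).map (algebraMap ℝ ℂ)) ≠ 0) ∧
      (∀ z ∈ spectrum ℂ ((Ashift β₁ β₂ δ).map (algebraMap ℝ ℂ)), ‖z‖ < 1) ∧
      0 ≤ Mshift μ lam α δ 0 0)
    ↔ α < 2 * (1 + β₁) * (1 + Real.sqrt (1 - μ * lam)) / (lam * (1 + 2 * β₂)) := by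
  rw [stepsize_bound_iff hμ hlam hμlam hβ₂.1]
  set s := √(1 - μ * lam)
  have hs : s < 1 := by
    rw [Real.sqrt_lt' one_pos]
    linarith [mul_pos hμ hlam]
  have hMshift := fun δ ↦ Mshift_zero_zero_nonneg_iff (δ := δ) hμ hμlam hα.le
  constructor
  · rintro ⟨δ, -, hstable, hM⟩
    have hδ : δ ≤ α * (s - 1) / μ := by
      rw [le_div_iff₀ hμ]
      linarith [le_abs_self (μ * δ + α), (hMshift δ).1 hM]
    have hjury := IsSchurStable.one_add_trace_add_det_pos hstable
    rw [trace_Ashift, det_Ashift] at hjury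
    nlinarith [hβ₂.1]
  · intro hjury
    set δ := α * (s - 1) / μ
    have hδ : μ * δ = α * (s - 1) := mul_div_cancel₀ _ hμ.ne'
    have hδneg : δ < 0 := div_neg_of_neg_of_pos (mul_neg_of_pos_of_neg hα (by linarith)) hμ
    have hstable : (Ashift β₁ β₂ δ).IsSchurStable := by
      apply isSchurStable_fin_two_of_jury <;> simp only [trace_Ashift, det_Ashift]
      · nlinarith [hβ₁.2, hβ₂.1]
      · linarith
      · linarith
    refine ⟨δ, hstable.det_exp_mul_I_smul_one_sub_ne_zero, hstable, (hMshift δ).2 ?_⟩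
    rw [hδ, abs_le]
    constructor <;> nlinarith [Real.sqrt_nonneg (1 - μ * lam)]
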